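/- Hayashi–Nagaoka operator inequality: for operators A, B on a finite-dimensional Hilbert space with 0 ≤ A ≤ I and B ≥ 0, one has I − (A + B)^{-1/2} A (A + B)^{-1/2} ≤ 2(I − A) + 4B, where (A+B)^{-1/2} is the pseudo-inverse square root. -/

import Mathlib

open Matrix
open scoped ComplexOrder Classical

noncomputable section

/-- Moore–Penrose pseudo-inverse square root of a Hermitian matrix
(eigenvalue `λ ↦ (√λ)⁻¹`, with `0⁻¹ = 0`); zero if the matrix is not Hermitian. -/
def pinvSqrt {n : Type*} [Fintype n] [DecidableEq n] (A : Matrix n n ℂ) : Matrix n n ℂ :=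
  if h : A.IsHermitian then
    (h.eigenvectorUnitary : Matrix n n ℂ) *
      Matrix.diagonal (fun i => (((Real.sqrt (h.eigenvalues i))⁻¹ : ℝ) : ℂ)) *
      (h.eigenvectorUnitary : Matrix n n ℂ)ᴴ
  else 0

namespace HNaux

variable {n : Type*} [Fintype n] [DecidableEq n]

def mfun {G : Matrix n n ℂ} (h : G.IsHermitian) (f : ℝ → ℝ) : Matrix n n ℂ :=
  (h.eigenvectorUnitary : Matrix n n ℂ) *
    Matrix.diagonal (fun i => ((f (h.eigenvalues i) : ℝ) : ℂ)) *
    (h.eigenvectorUnitary : Matrix n n ℂ)ᴴ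

variable {G : Matrix n n ℂ} (h : G.IsHermitian)

lemma conjT_mul :
    (h.eigenvectorUnitary : Matrix n n ℂ)ᴴ * (h.eigenvectorUnitary : Matrix n n ℂ) = 1 := by
  rw [← star_eq_conjTranspose]
  exact (Unitary.mem_iff.mp h.eigenvectorUnitary.2).1

lemma mul_conjT :
    (h.eigenvectorUnitary : Matrix n n ℂ) * (h.eigenvectorUnitary : Matrix n n ℂ)ᴴ = 1 := by
  rw [← star_eq_conjTranspose]
  exact (Unitary.mem_iff.mp h.eigenvectorUnitary.2).2

lemma mfun_mul (f g : ℝ → ℝ) :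
    mfun h f * mfun h g = mfun h (fun x => f x * g x) := by
  have hd : (Matrix.diagonal fun i => ((f (h.eigenvalues i) : ℝ) : ℂ)) *
      (Matrix.diagonal fun i => ((g (h.eigenvalues i) : ℝ) : ℂ)) =
      Matrix.diagonal fun i => (((fun x => f x * g x) (h.eigenvalues i) : ℝ) : ℂ) := by
    rw [diagonal_mul_diagonal]
    congr 1
    funext i
    push_cast
    ring
  unfold mfun
  simp only [Matrix.mul_assoc]
  rw [← Matrix.mul_assoc ((h.eigenvectorUnitary : Matrix n n ℂ))ᴴ, conjT_mul, Matrix.one_mul,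
      ← Matrix.mul_assoc (Matrix.diagonal _) (Matrix.diagonal _), hd]

lemma mfun_congr {f g : ℝ → ℝ} (hfg : ∀ i, f (h.eigenvalues i) = g (h.eigenvalues i)) :
    mfun h f = mfun h g := by
  have : (fun i => ((f (h.eigenvalues i) : ℝ) : ℂ)) = fun i => ((g (h.eigenvalues i) : ℝ) : ℂ) := by
    funext i
    rw [hfg]
  unfold mfun
  rw [this]

lemma mfun_isHermitian (f : ℝ → ℝ) : (mfun h f).IsHermitian := by
  unfold mfun Matrix.IsHermitian
  rw [conjTranspose_mul, conjTranspose_mul, conjTranspose_conjTranspose, diagonal_conjTranspose]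
  rw [Matrix.mul_assoc]
  congr 2
  funext i
  simp [Pi.star_def]

lemma mfun_posSemidef {f : ℝ → ℝ} (hf : ∀ i, 0 ≤ f (h.eigenvalues i)) :
    (mfun h f).PosSemidef := by
  apply Matrix.PosSemidef.mul_mul_conjTranspose_same
  refine posSemidef_diagonal_iff.mpr fun i => ?_
  exact_mod_cast hf i

lemma mfun_id : mfun h (fun x => x) = G := by
  conv_rhs => rw [h.spectral_theorem]
  rfl

lemma mfun_one : mfun h (fun _ => 1) = 1 := by
  unfold mfun
  have : (Matrix.diagonal (fun i => (((1:ℝ) : ℂ))) : Matrix n n ℂ) = 1 := by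
    simp
  rw [this, Matrix.mul_one, mul_conjT]

lemma mfun_sub (f g : ℝ → ℝ) :
    mfun h f - mfun h g = mfun h (fun x => f x - g x) := by
  unfold mfun
  rw [← Matrix.sub_mul, ← Matrix.mul_sub, diagonal_sub]
  congr 2
  funext i
  push_cast
  ring

def _root_.Matrix.PosSemidef.sqrt (hG : G.PosSemidef) : Matrix n n ℂ := mfun hG.1 Real.sqrt

lemma _root_.Matrix.PosSemidef.posSemidef_sqrt (hG : G.PosSemidef) : hG.sqrt.PosSemidef :=
  mfun_posSemidef hG.1 fun i => Real.sqrt_nonneg _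

lemma _root_.Matrix.PosSemidef.sqrt_mul_self (hG : G.PosSemidef) : hG.sqrt * hG.sqrt = G := by
  unfold Matrix.PosSemidef.sqrt
  rw [mfun_mul]
  conv_rhs => rw [← mfun_id hG.1]
  exact mfun_congr hG.1 fun i => Real.mul_self_sqrt (hG.eigenvalues_nonneg i)

lemma sqrt_eq (hG : G.PosSemidef) : hG.sqrt = mfun hG.1 Real.sqrt := rfl

/-- A nonzero complex-vector coerced from a Euclidean basis vector. -/
lemma eigvec_ne_zero {M : Matrix n n ℂ} (hM : M.IsHermitian) (i : n) :
    (⇑(hM.eigenvectorBasis i) : n → ℂ) ≠ 0 := by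
  intro h0
  have h1 := hM.eigenvectorBasis.orthonormal.ne_zero i
  apply h1
  ext j
  exact congrFun h0 j

/-- Eigenvalues of `A` are at most 1 when `1 - A` is PSD. -/
lemma eigenvalues_le_one {A : Matrix n n ℂ} (hA : A.PosSemidef)
    (hAI : ((1 : Matrix n n ℂ) - A).PosSemidef) (i : n) :
    hA.1.eigenvalues i ≤ 1 := by
  set v : n → ℂ := ⇑(hA.1.eigenvectorBasis i) with hv
  have hmv : A *ᵥ v = hA.1.eigenvalues i • v := hA.1.mulVec_eigenvectorBasis i
  have hd : (0 : ℂ) < star v ⬝ᵥ v := dotProduct_star_self_pos_iff.mpr (eigvec_ne_zero hA.1 i)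
  have h2 := hAI.dotProduct_mulVec_nonneg v
  rw [sub_mulVec, dotProduct_sub, one_mulVec, hmv, dotProduct_smul] at h2
  by_contra hgt
  push_neg at hgt
  set μ := hA.1.eigenvalues i
  have hsm : μ • (star v ⬝ᵥ v) = (μ : ℂ) * (star v ⬝ᵥ v) := by
    simp [Complex.real_smul]
  rw [hsm] at h2
  have hfac : star v ⬝ᵥ v - (μ:ℂ) * (star v ⬝ᵥ v) = ((1 - μ : ℝ) : ℂ) * (star v ⬝ᵥ v) := by
    push_cast
    ring
  rw [hfac] at h2
  have hre := (Complex.le_def.mp h2).1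
  have hdre : 0 < (star v ⬝ᵥ v).re := (Complex.lt_def.mp hd).1
  have him : (star v ⬝ᵥ v).im = 0 := ((Complex.lt_def.mp hd).2).symm
  rw [Complex.mul_re, Complex.ofReal_re, Complex.ofReal_im, him] at hre
  simp only [Complex.zero_re, mul_zero, zero_mul, sub_zero] at hre
  nlinarith

lemma dot_move {W : Matrix n n ℂ} (hW : W.IsHermitian) (u w : n → ℂ) :
    star u ⬝ᵥ (W *ᵥ w) = star (W *ᵥ u) ⬝ᵥ w := by
  rw [star_mulVec, hW.eq, ← dotProduct_mulVec]

/-- Loewner monotonicity of the PSD square root. -/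
lemma sqrt_mono {X Y : Matrix n n ℂ} (hX : X.PosSemidef) (hY : Y.PosSemidef)
    (hle : (Y - X).PosSemidef) : (hY.sqrt - hX.sqrt).PosSemidef := by
  have hP := hY.posSemidef_sqrt
  have hQ := hX.posSemidef_sqrt
  set P := hY.sqrt with hPdef
  set Q := hX.sqrt with hQdef
  have hM : (P - Q).IsHermitian := hP.1.sub hQ.1
  apply hM.posSemidef_iff_eigenvalues_nonneg.mpr
  intro i
  by_contra hneg
  push_neg at hneg
  set lam := hM.eigenvalues i with hlam
  set v : n → ℂ := ⇑(hM.eigenvectorBasis i) with hv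
  have hvne : v ≠ 0 := eigvec_ne_zero hM i
  have hmv : (P - Q) *ᵥ v = lam • v := hM.mulVec_eigenvectorBasis i
  rw [sub_mulVec] at hmv
  have hsm : lam • v = (lam : ℂ) • v := by
    funext j; simp [Complex.real_smul]
  rw [hsm] at hmv
  have hQv : Q *ᵥ v = P *ᵥ v - (lam : ℂ) • v := by
    rw [sub_eq_iff_eq_add.mp hmv]; abel
  have e1 : P *ᵥ (P *ᵥ v) - Q *ᵥ (Q *ᵥ v) = (Y - X) *ᵥ v := by
    rw [mulVec_mulVec, mulVec_mulVec, hY.sqrt_mul_self, hX.sqrt_mul_self, sub_mulVec]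
  have hp : (0:ℂ) ≤ star v ⬝ᵥ (P *ᵥ v) := hP.dotProduct_mulVec_nonneg v
  have hpim : (star v ⬝ᵥ (P *ᵥ v)).im = 0 := ((Complex.le_def.mp hp).2).symm
  have hpre : 0 ≤ (star v ⬝ᵥ (P *ᵥ v)).re := by
    have := (Complex.le_def.mp hp).1; simpa using this
  have hstarp : star (star v ⬝ᵥ (P *ᵥ v)) = star v ⬝ᵥ (P *ᵥ v) := by
    apply Complex.ext <;> simp [hpim]
  have hq : star (P *ᵥ v) ⬝ᵥ v = star v ⬝ᵥ (P *ᵥ v) := by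
    rw [star_dotProduct, hstarp]
  have hd : (0:ℂ) < star v ⬝ᵥ v := dotProduct_star_self_pos_iff.mpr hvne
  have hdre : 0 < (star v ⬝ᵥ v).re := by
    have := (Complex.lt_def.mp hd).1; simpa using this
  have hdim : (star v ⬝ᵥ v).im = 0 := ((Complex.lt_def.mp hd).2).symm
  have hscalar : star v ⬝ᵥ ((Y - X) *ᵥ v)
      = 2 * (lam:ℂ) * (star v ⬝ᵥ (P *ᵥ v)) - (lam:ℂ) * (lam:ℂ) * (star v ⬝ᵥ v) := by
    rw [← e1, dotProduct_sub, dot_move hP.1, dot_move hQ.1, hQv]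
    simp only [star_sub, star_smul, sub_dotProduct, dotProduct_sub, smul_dotProduct,
      dotProduct_smul, smul_eq_mul, Complex.star_def, Complex.conj_ofReal, hq]
    ring
  have ha := hle.dotProduct_mulVec_nonneg v
  rw [hscalar] at ha
  have hare := (Complex.le_def.mp ha).1
  simp only [Complex.zero_re, Complex.sub_re, Complex.mul_re, Complex.mul_im,
    Complex.ofReal_re, Complex.ofReal_im, Complex.re_ofNat, Complex.im_ofNat,
    hpim, hdim, mul_zero, zero_mul, sub_zero, add_zero, zero_add] at hare
  nlinarith [mul_pos (mul_pos_of_neg_of_neg hneg hneg) hdre, mul_nonneg (neg_nonneg.mpr hneg.le) hpre]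

end HNaux

open HNaux

/-- **Hayashi–Nagaoka operator inequality.** For `0 ≤ A ≤ I` and `B ≥ 0`,
`I − (A + B)^{-1/2} A (A + B)^{-1/2} ≤ 2(I − A) + 4B`. -/
theorem hayashi_nagaoka {n : Type*} [Fintype n] [DecidableEq n]
    (A B : Matrix n n ℂ)
    (hA : A.PosSemidef) (hAI : ((1 : Matrix n n ℂ) - A).PosSemidef)
    (hB : B.PosSemidef) :
    ((2 : ℂ) • ((1 : Matrix n n ℂ) - A) + (4 : ℂ) • B -
      ((1 : Matrix n n ℂ) - pinvSqrt (A + B) * A * pinvSqrt (A + B))).PosSemidef := by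
  have hG : (A + B).PosSemidef := hA.add hB
  have h : (A + B).IsHermitian := hG.1
  have hev : ∀ i, 0 ≤ h.eigenvalues i := fun i => hG.eigenvalues_nonneg i
  set N : Matrix n n ℂ := mfun h (fun x => (Real.sqrt x)⁻¹) with hNdef
  set R : Matrix n n ℂ := mfun h Real.sqrt with hRdef
  set Pi : Matrix n n ℂ := mfun h (fun x => Real.sqrt x * (Real.sqrt x)⁻¹) with hPidef
  have hpinv : pinvSqrt (A + B) = N := by
    rw [pinvSqrt, dif_pos h, hNdef]
    rfl
  -- relations
  have r1 : N * (A + B) = R := by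
    conv_lhs => rw [show A + B = mfun h (fun x => x) from (mfun_id h).symm]
    rw [hNdef, mfun_mul]
    apply mfun_congr
    intro i
    have ht := hev i
    rcases eq_or_lt_of_le ht with h0 | h0
    · simp [← h0]
    · have hs : Real.sqrt (h.eigenvalues i) ≠ 0 := ne_of_gt (Real.sqrt_pos.mpr h0)
      field_simp
      rw [Real.sq_sqrt ht]
  have r2 : (A + B) * N = R := by
    conv_lhs => rw [show A + B = mfun h (fun x => x) from (mfun_id h).symm]
    rw [hNdef, mfun_mul]
    apply mfun_congr
    intro i
    have ht := hev i
    rcases eq_or_lt_of_le ht with h0 | h0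
    · simp [← h0]
    · have hs : Real.sqrt (h.eigenvalues i) ≠ 0 := ne_of_gt (Real.sqrt_pos.mpr h0)
      field_simp
      rw [Real.sq_sqrt ht]
  have r3 : R * N = Pi := by
    rw [hRdef, hNdef, mfun_mul]
  have hNh : Nᴴ = N := mfun_isHermitian h _
  -- PSD pieces
  have hPSD1 : ((1 : Matrix n n ℂ) - Pi).PosSemidef := by
    have e : (1 : Matrix n n ℂ) - Pi = mfun h (fun x => 1 - Real.sqrt x * (Real.sqrt x)⁻¹) := by
      rw [hPidef, ← mfun_one h, mfun_sub]
    rw [e]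
    apply mfun_posSemidef
    intro i
    rcases eq_or_ne (Real.sqrt (h.eigenvalues i)) 0 with hs | hs
    · simp [hs]
    · rw [mul_inv_cancel₀ hs]
      norm_num
  have hQA : (hA.sqrt - A).PosSemidef := by
    have e : hA.sqrt - A = mfun hA.1 (fun x => Real.sqrt x - x) := by
      calc hA.sqrt - A = mfun hA.1 Real.sqrt - mfun hA.1 (fun x => x) := by
            rw [mfun_id hA.1, sqrt_eq hA]
        _ = mfun hA.1 (fun x => Real.sqrt x - x) := mfun_sub _ _ _
    rw [e]
    apply mfun_posSemidef
    intro i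
    have h0 : 0 ≤ hA.1.eigenvalues i := hA.eigenvalues_nonneg i
    have h1 : hA.1.eigenvalues i ≤ 1 := eigenvalues_le_one hA hAI i
    have hs1 : Real.sqrt (hA.1.eigenvalues i) ≤ 1 := Real.sqrt_le_one.mpr h1
    have hmul := mul_nonneg (Real.sqrt_nonneg (hA.1.eigenvalues i)) (sub_nonneg.mpr hs1)
    nlinarith [Real.mul_self_sqrt h0]
  have hRQ : (R - hA.sqrt).PosSemidef := by
    have h1 : (hG.sqrt - hA.sqrt).PosSemidef := by
      apply sqrt_mono hA hG
      rw [add_sub_cancel_left]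
      exact hB
    have h2 : hG.sqrt = R := by rw [sqrt_eq hG, hRdef]
    rwa [h2] at h1
  have hPSD2 : (R - A).PosSemidef := by
    have hs2 := hRQ.add hQA
    rwa [sub_add_sub_cancel] at hs2
  have hPSD3 : ((N - 1) * A * (N - 1)).PosSemidef := by
    have e : (N - 1 : Matrix n n ℂ)ᴴ = N - 1 := by
      rw [conjTranspose_sub, hNh, conjTranspose_one]
    have := hA.mul_mul_conjTranspose_same (N - 1)
    rwa [e] at this
  have hPSD4 : ((N - 2) * B * (N - 2)).PosSemidef := by
    have e : (N - 2 : Matrix n n ℂ)ᴴ = N - 2 := by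
      rw [conjTranspose_sub, hNh]
      congr 1
      simp
    have := hB.mul_mul_conjTranspose_same (N - 2)
    rwa [e] at this
  -- combined relations
  have hR1 : N * A + N * B = R := by rw [← Matrix.mul_add, r1]
  have hR2 : A * N + B * N = R := by rw [← Matrix.add_mul, r2]
  have hPi : N * A * N + N * B * N = Pi := by
    have e : N * A * N + N * B * N = (N * (A + B)) * N := by noncomm_ring
    rw [e, r1, r3]
  have ps1 : ((1 : Matrix n n ℂ) - (N * A * N + N * B * N)).PosSemidef := by
    rw [hPi]; exact hPSD1
  have ps2 : ((N * A + N * B) - A).PosSemidef := by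
    rw [hR1]; exact hPSD2
  have hz : (A * N + B * N) - (N * A + N * B) = 0 := by
    rw [hR1, hR2, sub_self]
  have hsum : (((1 : Matrix n n ℂ) - (N * A * N + N * B * N))
      + ((((N * A + N * B) - A) + ((N * A + N * B) - A)) + (((N * A + N * B) - A)
        + ((N * A + N * B) - A)))
      + (((N - 1) * A * (N - 1)) + ((N - 1) * A * (N - 1)))
      + ((N - 2) * B * (N - 2))).PosSemidef :=
    ((ps1.add (((ps2.add ps2)).add (ps2.add ps2))).add (hPSD3.add hPSD3)).add hPSD4
  have key : (2 : ℂ) • ((1 : Matrix n n ℂ) - A) + (4 : ℂ) • B -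
      ((1 : Matrix n n ℂ) - N * A * N)
      = ((1 : Matrix n n ℂ) - (N * A * N + N * B * N))
      + ((((N * A + N * B) - A) + ((N * A + N * B) - A)) + (((N * A + N * B) - A)
        + ((N * A + N * B) - A)))
      + (((N - 1) * A * (N - 1)) + ((N - 1) * A * (N - 1)))
      + ((N - 2) * B * (N - 2)) := by
    rw [show (2 : ℂ) • ((1 : Matrix n n ℂ) - A) = ((1 : Matrix n n ℂ) - A)
        + ((1 : Matrix n n ℂ) - A) from two_smul ℂ _]
    rw [show (4 : ℂ) • B = ((B + B) + B) + B from by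
      rw [show (4 : ℂ) = 2 + 1 + 1 by norm_num, add_smul, add_smul, two_smul ℂ B, one_smul]]
    rw [← sub_eq_zero]
    calc ((1 : Matrix n n ℂ) - A) + ((1 : Matrix n n ℂ) - A) + (((B + B) + B) + B) -
          ((1 : Matrix n n ℂ) - N * A * N)
        - (((1 : Matrix n n ℂ) - (N * A * N + N * B * N))
          + ((((N * A + N * B) - A) + ((N * A + N * B) - A)) + (((N * A + N * B) - A)
            + ((N * A + N * B) - A)))
          + (((N - 1) * A * (N - 1)) + ((N - 1) * A * (N - 1)))
          + ((N - 2) * B * (N - 2)))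
        = ((A * N + B * N) - (N * A + N * B)) + ((A * N + B * N) - (N * A + N * B)) := by
          noncomm_ring
      _ = 0 := by rw [hz]; simp
  rw [hpinv, key]
  exact hsum
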